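/- Let V be a Q-vector space and m, r positive integers. For v_1,...,v_m, w_1,...,w_m in V, if Σ_{i=1}^m v_i^{⊗k} = Σ_{i=1}^m w_i^{⊗k} in V^{⊗k} for all 1 ≤ k ≤ min(m,r), then Σ_{i=1}^m v_i^{⊗k} = Σ_{i=1}^m w_i^{⊗k} for all 1 ≤ k ≤ r. -/

import Mathlib

/-!
Testing the tensors against a basis of `V^{⊗k}` reduces the claim to the scalar identities
`∑ i, ∏ j, φ j (v i) = ∑ i, ∏ j, φ j (w i)` for linear forms `φ 0, …, φ (k-1)`. By polarization
(the coefficient of `t 0 ⋯ t (k-1)` in `(∑ j, t j * φ j u) ^ k` is `k! * ∏ j, φ j u`) it suffices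
to compare the power sums `∑ i, ψ (v i) ^ k` for a single linear form `ψ`. For `k ≤ m` these are
`ψ^{⊗k}` applied to the hypothesis, and by Newton's identities the first `m` power sums of `m`
scalars determine their elementary symmetric functions, hence the scalars up to order, hence all
power sums.
-/

open Finset

theorem Multiset.eq_of_esymm_eq {R : Type*} [CommRing R] [IsDomain R] {s t : Multiset R}
    (hcard : Multiset.card s = Multiset.card t)
    (h : ∀ j ≤ Multiset.card s, s.esymm j = t.esymm j) : s = t := by
  rw [← Polynomial.roots_multiset_prod_X_sub_C s, ← Polynomial.roots_multiset_prod_X_sub_C t,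
    Multiset.prod_X_sub_X_eq_sum_esymm, Multiset.prod_X_sub_X_eq_sum_esymm, ← hcard]
  refine congrArg _ (sum_congr rfl fun j hj => ?_)
  rw [h j (Nat.lt_succ_iff.mp (mem_range.mp hj))]

section PowerSums

variable {σ R : Type*} [Fintype σ] [CommRing R] [IsDomain R] [CharZero R]

theorem esymm_map_eq_of_sum_pow_eq {x y : σ → R}
    (h : ∀ j, 1 ≤ j → j ≤ Fintype.card σ → ∑ i, x i ^ j = ∑ i, y i ^ j) :
    ∀ j ≤ Fintype.card σ, (univ.val.map x).esymm j = (univ.val.map y).esymm j := by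
  have hpsum : ∀ z : σ → R, ∀ j, MvPolynomial.aeval z (MvPolynomial.psum σ R j) = ∑ i, z i ^ j :=
    fun z j => by simp [MvPolynomial.psum]
  intro j
  induction j using Nat.strong_induction_on with
  | _ j ih =>
    intro hj
    simp only [← MvPolynomial.aeval_esymm_eq_multiset_esymm σ R] at ih ⊢
    rcases Nat.eq_zero_or_pos j with rfl | hj0
    · simp
    have newton (z : σ → R) := congrArg (MvPolynomial.aeval z) (MvPolynomial.mul_esymm_eq_sum σ R j)
    simp only [map_mul, map_natCast, map_pow, map_neg, map_one, map_sum] at newton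
    refine mul_left_cancel₀ (Nat.cast_ne_zero.mpr hj0.ne') ?_
    rw [newton x, newton y]
    refine congrArg _ (sum_congr rfl fun a ha => ?_)
    simp only [mem_filter, HasAntidiagonal.mem_antidiagonal] at ha
    rw [ih a.1 ha.2 (by omega), hpsum, hpsum, h a.2 (by omega) (by omega)]

theorem sum_pow_eq_of_sum_pow_eq_of_le_card {x y : σ → R}
    (h : ∀ j, 1 ≤ j → j ≤ Fintype.card σ → ∑ i, x i ^ j = ∑ i, y i ^ j) (k : ℕ) :
    ∑ i, x i ^ k = ∑ i, y i ^ k := by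
  have hxy : univ.val.map x = univ.val.map y :=
    Multiset.eq_of_esymm_eq (by simp) (by simpa using esymm_map_eq_of_sum_pow_eq h)
  calc ∑ i, x i ^ k = ((univ.val.map x).map (· ^ k)).sum := by rw [Multiset.map_map]; rfl
    _ = ((univ.val.map y).map (· ^ k)).sum := by rw [hxy]
    _ = ∑ i, y i ^ k := by rw [Multiset.map_map]; rfl

end PowerSums

theorem MvPolynomial.coeff_equivFunOnFinite_one_sum_smul_X_pow {R : Type*} [CommRing R] {k : ℕ}
    (a : Fin k → R) :
    coeff (Finsupp.equivFunOnFinite.symm 1) ((∑ j, a j • X j : MvPolynomial (Fin k) R) ^ k) =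
      k.factorial * ∏ j, a j := by
  have hmultinomial : (Finsupp.equivFunOnFinite.symm 1 : Fin k →₀ ℕ).multinomial = k.factorial := by
    rw [Finsupp.multinomial_eq_of_support_subset (subset_univ _)]
    simpa using Nat.multinomial_spec univ (Finsupp.equivFunOnFinite.symm 1 : Fin k →₀ ℕ)
  simp [coeff_linearCombination_X_pow_of_fintype, Finsupp.sum_fintype, Finsupp.prod_fintype,
    hmultinomial]

open MvPolynomial in
theorem sum_prod_eq_of_sum_pow_eq {R ι : Type*} [CommRing R] [IsDomain R] [CharZero R]
    [Fintype ι] {k : ℕ} (a b : ι → Fin k → R)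
    (h : ∀ t : Fin k → R, ∑ i, (∑ j, t j * a i j) ^ k = ∑ i, (∑ j, t j * b i j) ^ k) :
    ∑ i, ∏ j, a i j = ∑ i, ∏ j, b i j := by
  let P (c : ι → Fin k → R) : MvPolynomial (Fin k) R := ∑ i, (∑ j, c i j • X j) ^ k
  have hP : P a = P b := MvPolynomial.funext fun t => by
    simpa [P, mul_comm] using h t
  have hcoeff (c : ι → Fin k → R) :
      coeff (Finsupp.equivFunOnFinite.symm 1) (P c) = k.factorial * ∑ i, ∏ j, c i j := by
    simp [P, coeff_sum, coeff_equivFunOnFinite_one_sum_smul_X_pow, mul_sum]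
  have := congrArg (coeff (Finsupp.equivFunOnFinite.symm 1)) hP
  rw [hcoeff, hcoeff] at this
  exact mul_left_cancel₀ (Nat.cast_ne_zero.mpr k.factorial_ne_zero) this

namespace PiTensorProduct

variable {R M ι : Type*} [Fintype ι] {k : ℕ}

theorem sum_pow_eq_of_sum_tprod_eq [CommSemiring R] [AddCommMonoid M] [Module R M] {v w : ι → M}
    (h : ∑ i, tprod R (fun _ : Fin k => v i) = ∑ i, tprod R (fun _ : Fin k => w i))
    (φ : Module.Dual R M) : ∑ i, φ (v i) ^ k = ∑ i, φ (w i) ^ k := by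
  simpa using congrArg
    (lift ((MultilinearMap.mkPiAlgebra R (Fin k) R).compLinearMap fun _ => φ)) h

theorem sum_tprod_eq_of_sum_prod_eq [CommRing R] [AddCommGroup M] [Module R M] [Module.Free R M]
    {v w : ι → M} (h : ∀ φ : Fin k → Module.Dual R M, ∑ i, ∏ j, φ j (v i) = ∑ i, ∏ j, φ j (w i)) :
    ∑ i, tprod R (fun _ : Fin k => v i) = ∑ i, tprod R (fun _ : Fin k => w i) := by
  let b := Module.Free.chooseBasis R M
  refine (Basis.piTensorProduct fun _ : Fin k => b).ext_elem fun p => ?_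
  simpa [Basis.piTensorProduct_repr_tprod_apply] using h fun j => b.coord (p j)

theorem sum_tprod_eq_of_le_card {K V : Type*} [Field K] [CharZero K] [AddCommGroup V]
    [Module K V] {v w : ι → V}
    (h : ∀ j, 1 ≤ j → j ≤ Fintype.card ι →
      ∑ i, tprod K (fun _ : Fin j => v i) = ∑ i, tprod K (fun _ : Fin j => w i)) (k : ℕ) :
    ∑ i, tprod K (fun _ : Fin k => v i) = ∑ i, tprod K (fun _ : Fin k => w i) := by
  refine sum_tprod_eq_of_sum_prod_eq fun φ => ?_
  refine sum_prod_eq_of_sum_pow_eq (fun i j => φ j (v i)) (fun i j => φ j (w i)) fun t => ?_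
  have hψ (u : V) : ∑ j, t j * φ j u = (∑ j, t j • φ j) u := by simp
  simp only [hψ]
  exact sum_pow_eq_of_sum_pow_eq_of_le_card
    (fun j hj1 hj => sum_pow_eq_of_sum_tprod_eq (h j hj1 hj) _) k

end PiTensorProduct

theorem stmt_5_general (V : Type*) [AddCommGroup V] [Module ℚ V] (m r : ℕ)
    (v w : Fin m → V)
    (h : ∀ k : ℕ, 1 ≤ k → k ≤ min m r →
      ∑ i, PiTensorProduct.tprod ℚ (fun _ : Fin k => v i) =
        ∑ i, PiTensorProduct.tprod ℚ (fun _ : Fin k => w i)) :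
    ∀ k : ℕ, 1 ≤ k → k ≤ r →
      ∑ i, PiTensorProduct.tprod ℚ (fun _ : Fin k => v i) =
        ∑ i, PiTensorProduct.tprod ℚ (fun _ : Fin k => w i) := by
  intro k hk hkr
  rcases le_total r m with hrm | hmr
  · exact h k hk (by omega)
  · exact PiTensorProduct.sum_tprod_eq_of_le_card
      (fun j hj hjm => h j hj (by simp only [Fintype.card_fin] at hjm; omega)) k

theorem stmt_5 (V : Type*) [AddCommGroup V] [Module ℚ V] (m r : ℕ) (hm : 0 < m) (hr : 0 < r)
    (v w : Fin m → V)
    (h : ∀ k : ℕ, 1 ≤ k → k ≤ min m r →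
      ∑ i, PiTensorProduct.tprod ℚ (fun _ : Fin k => v i) =
        ∑ i, PiTensorProduct.tprod ℚ (fun _ : Fin k => w i)) :
    ∀ k : ℕ, 1 ≤ k → k ≤ r →
      ∑ i, PiTensorProduct.tprod ℚ (fun _ : Fin k => v i) =
        ∑ i, PiTensorProduct.tprod ℚ (fun _ : Fin k => w i) :=
  stmt_5_general V m r v w h
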